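/- The R-linear map from the ring R[[x]] of formal power series over R to the dual module Hom_R(H, R), sending a power series Σ_i a_i x^i to the functional determined by D_i ↦ a_i, is bijective, sends the constant power series 1 to the counit ε, and transforms multiplication of power series into the convolution product dual to Δ, namely (λ ⋆ μ)(D_i) = Σ_{p+q=i} λ(D_p) · μ(D_q). Hence the convolution algebra H* = Hom_R(H, R) is isomorphic as an R-algebra to R[[x]]. -/

import Mathlib

open Finsupp

/-- Let `H` be the free `R`-module on basis `{D i : i ∈ ℕ}` (realized as `ℕ →₀ R`,
`D i = single i 1`), the underlying module of the binomial Hopf algebra with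
comultiplication `Δ (D i) = Σ_{p+q=i} D p ⊗ D q` and counit `ε (D i) = δ_{i,0}`.
The `R`-linear map `Θ : R[[x]] → Hom_R(H, R)` sending a power series
`Σ aᵢ xⁱ` to the functional `D i ↦ aᵢ` is bijective, sends the constant power
series `1` to the counit `ε`, and transforms multiplication of power series into
the convolution product dual to `Δ`:
`Θ (f * g) (D i) = Σ_{p+q=i} Θ f (D p) * Θ g (D q)`.
Hence the convolution algebra `H* = Hom_R(H, R)` is isomorphic as an `R`-algebra
to `R[[x]]`. -/
theorem powerSeries_iso_dual_binomial_hopf (R : Type*) [CommRing R]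
    -- the map `Θ`, determined by `Θ (Σ aᵢ xⁱ) (D i) = aᵢ`:
    (Θ : PowerSeries R →ₗ[R] ((ℕ →₀ R) →ₗ[R] R))
    (hΘ : ∀ (f : PowerSeries R) (i : ℕ), Θ f (single i 1) = PowerSeries.coeff i f)
    -- the counit `ε`:
    (ε : (ℕ →₀ R) →ₗ[R] R)
    (hε : ∀ i : ℕ, ε (single i 1) = if i = 0 then (1 : R) else 0) :
    -- `Θ` is bijective,
    Function.Bijective Θ ∧
    -- sends `1` to the counit `ε`,
    Θ 1 = ε ∧
    -- and turns multiplication into the convolution product dual to `Δ`: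
    (∀ f g : PowerSeries R, ∀ i : ℕ,
      Θ (f * g) (single i 1)
        = ∑ pq ∈ Finset.HasAntidiagonal.antidiagonal i,
            Θ f (single pq.1 1) * Θ g (single pq.2 1)) := by
  have hext : ∀ (lam mu : (ℕ →₀ R) →ₗ[R] R),
      (∀ i : ℕ, lam (single i 1) = mu (single i 1)) → lam = mu := by
    intro lam mu h
    apply Finsupp.lhom_ext
    intro i r
    have : (single i r : ℕ →₀ R) = r • single i 1 := by
      rw [smul_single, smul_eq_mul, mul_one]
    rw [this, map_smul, map_smul, h i]
  refine ⟨⟨?_, ?_⟩, ?_, ?_⟩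
  · intro f g h
    ext i
    have := hΘ f i
    rw [h, hΘ g i] at this
    exact this.symm
  · intro lam
    refine ⟨PowerSeries.mk (fun i => lam (single i 1)), ?_⟩
    apply hext
    intro i
    rw [hΘ, PowerSeries.coeff_mk]
  · apply hext
    intro i
    rw [hΘ, hε, PowerSeries.coeff_one]
  · intro f g i
    rw [hΘ, PowerSeries.coeff_mul]
    exact Finset.sum_congr rfl fun pq _ => by rw [hΘ, hΘ]
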